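/- Let V be a self-orthogonal d-dimensional F_q-subspace of F_q^{2n}, let c : V → ℂ with c(0) = 1 be such that W(v) := c(v)·W̃(v) satisfies W(v) W(v') = W(v+v') for all v, v' ∈ V, and let (P_{[w]})_{[w] ∈ F_q^{2n}/V^{⊥J}} be the family of mutually orthogonal projections summing to the identity with W(v) = ∑_{[w]} ω^{⟨v,Jw⟩} P_{[w]} for all v ∈ V. Then for all w, w' ∈ F_q^{2n}, the image of the column space of P_{[w']} under left multiplication by W̃(w) equals the column space of P_{[w+w']}. -/

import Mathlib

/-! The projections `P_[w]` diagonalise the operators `W(v)`, `v ∈ V`, with eigenvalues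
`ω^⟨v, Jw⟩`, and these characters separate the cosets of `V^{⊥J}`; hence the column space of
`P_[w]` is exactly the joint eigenspace of the `W(v)` for the character `v ↦ ω^⟨v, Jw⟩`.
The commutation relation `W̃(v) W̃(w) = ω^⟨v, Jw⟩ W̃(w) W̃(v)` shows that `W̃(w)` maps the
joint eigenspace for `w'` into the one for `w + w'`, and since `W̃(w) W̃(-w)` is a nonzero
multiple of the identity, this inclusion is an equality. -/

/-- `ω = exp(2πi/p)`, a primitive `p`-th root of unity. -/
noncomputable def omg (p : ℕ) : ℂ := Complex.exp (2 * (Real.pi : ℂ) * Complex.I / (p : ℂ))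

/-- The `F_p`-valued pairing `⟨x, y⟩ = tr(∑ s, x s * y s)` on `F_q^n`, where
`tr : F_q → F_p` is the field trace. -/
noncomputable def ip (p : ℕ) {K : Type*} [Field K] [Fintype K] [Algebra (ZMod p) K]
    {n : ℕ} (x y : Fin n → K) : ZMod p :=
  Algebra.trace (ZMod p) K (∑ s, x s * y s)

/-- The Weyl operator `W̃(a,b)`: the `q^n × q^n` complex matrix, with rows and columns
indexed by `F_q^n`, whose `(j,k)` entry is `ω^{⟨b,k⟩}` if `j = k + a` and `0`
otherwise. -/
noncomputable def Wt (p : ℕ) {K : Type*} [Field K] [Fintype K] [DecidableEq K]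
    [Algebra (ZMod p) K] {n : ℕ} (a b : Fin n → K) :
    Matrix (Fin n → K) (Fin n → K) ℂ :=
  Matrix.of fun j k => if j = k + a then omg p ^ (ip p b k).val else 0

/-- The Weyl operator `W̃(v)` of a vector `v = (a,b) ∈ F_q^{2n} = F_q^n × F_q^n`. -/
noncomputable def Wtv (p : ℕ) {K : Type*} [Field K] [Fintype K] [DecidableEq K]
    [Algebra (ZMod p) K] {n : ℕ} (v : (Fin n → K) × (Fin n → K)) :
    Matrix (Fin n → K) (Fin n → K) ℂ :=
  Wt p v.1 v.2

/-- The symplectic pairing `⟨v, Jw⟩ = ⟨v.2, w.1⟩ − ⟨v.1, w.2⟩ ∈ F_p` on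
`F_q^{2n} = F_q^n × F_q^n`, where `J = [[0, −I_n],[I_n, 0]]`. -/
noncomputable def symp (p : ℕ) {K : Type*} [Field K] [Fintype K] [Algebra (ZMod p) K]
    {n : ℕ} (v w : (Fin n → K) × (Fin n → K)) : ZMod p :=
  ip p v.2 w.1 - ip p v.1 w.2

lemma ip_add_right (p : ℕ) {K : Type*} [Field K] [Fintype K] [Algebra (ZMod p) K]
    {n : ℕ} (x y y' : Fin n → K) : ip p x (y + y') = ip p x y + ip p x y' := by
  unfold ip
  rw [← map_add]
  congr 1
  simp [mul_add, Finset.sum_add_distrib]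

lemma ip_neg_right (p : ℕ) {K : Type*} [Field K] [Fintype K] [Algebra (ZMod p) K]
    {n : ℕ} (x y : Fin n → K) : ip p x (-y) = - ip p x y := by
  unfold ip
  rw [← map_neg]
  congr 1
  simp [mul_neg]

lemma ip_zero_right (p : ℕ) {K : Type*} [Field K] [Fintype K] [Algebra (ZMod p) K]
    {n : ℕ} (x : Fin n → K) : ip p x 0 = 0 := by
  simp [ip]

/-- `V^{⊥J} = {w ∈ F_q^{2n} : ⟨v, Jw⟩ = 0 for all v ∈ V}`, as an additive subgroup of
`F_q^{2n}` (so that one can form the quotient `F_q^{2n} / V^{⊥J}`). -/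
def sympPerp (p : ℕ) {K : Type*} [Field K] [Fintype K] [Algebra (ZMod p) K]
    {n : ℕ} (V : Submodule K ((Fin n → K) × (Fin n → K))) :
    AddSubgroup ((Fin n → K) × (Fin n → K)) where
  carrier := {w | ∀ v ∈ V, symp p v w = 0}
  zero_mem' := by
    intro v _
    simp [symp, ip_zero_right]
  add_mem' := by
    intro w w' hw hw' v hv
    have h : symp p v (w + w') = symp p v w + symp p v w' := by
      simp only [symp, Prod.fst_add, Prod.snd_add, ip_add_right]
      ring
    rw [h, hw v hv, hw' v hv, add_zero]
  neg_mem' := by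
    intro w hw v hv
    have h : symp p v (-w) = - symp p v w := by
      simp only [symp, Prod.fst_neg, Prod.snd_neg, ip_neg_right]
      ring
    rw [h, hw v hv, neg_zero]

open Matrix

section OrthogonalIdempotents

variable {ι m 𝕜 : Type*} [Finite ι] [Fintype m] [Field 𝕜] {P : ι → Matrix m m 𝕜}

theorem Matrix.finsum_smul_mul_of_orthogonal (hidem : ∀ x, P x * P x = P x)
    (horth : ∀ x y, x ≠ y → P x * P y = 0) (f : ι → 𝕜) (y : ι) :
    (∑ᶠ x, f x • P x) * P y = f y • P y := by
  have := Fintype.ofFinite ι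
  rw [finsum_eq_sum_of_fintype, Finset.sum_mul, Finset.sum_eq_single y
    (fun x _ hxy => by rw [smul_mul_assoc, horth x y hxy, smul_zero]) (by simp),
    smul_mul_assoc, hidem]

theorem Matrix.mul_finsum_smul_of_orthogonal (hidem : ∀ x, P x * P x = P x)
    (horth : ∀ x y, x ≠ y → P x * P y = 0) (f : ι → 𝕜) (y : ι) :
    P y * (∑ᶠ x, f x • P x) = f y • P y := by
  have := Fintype.ofFinite ι
  rw [finsum_eq_sum_of_fintype, Finset.mul_sum, Finset.sum_eq_single y
    (fun x _ hxy => by rw [mul_smul_comm, horth y x hxy.symm, smul_zero]) (by simp),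
    mul_smul_comm, hidem]

theorem Matrix.range_mulVecLin_eq_iInf_eigenspace [DecidableEq m] {α : Type*}
    (hidem : ∀ x, P x * P x = P x) (horth : ∀ x y, x ≠ y → P x * P y = 0)
    (hsum : ∑ᶠ x, P x = 1) (A : α → Matrix m m 𝕜) (f : α → ι → 𝕜)
    (hA : ∀ a, A a = ∑ᶠ x, f a x • P x) (hsep : ∀ y z, y ≠ z → ∃ a, f a y ≠ f a z) (z : ι) :
    LinearMap.range (P z).mulVecLin = ⨅ a, Module.End.eigenspace (A a).mulVecLin (f a z) := by
  ext u
  simp only [LinearMap.mem_range, Submodule.mem_iInf, Module.End.mem_eigenspace_iff,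
    Matrix.mulVecLin_apply]
  constructor
  · rintro ⟨t, rfl⟩ a
    rw [Matrix.mulVec_mulVec, hA, finsum_smul_mul_of_orthogonal hidem horth, Matrix.smul_mulVec]
  · intro hu
    have hvanish : ∀ y, y ≠ z → P y *ᵥ u = 0 := by
      intro y hyz
      obtain ⟨a, ha⟩ := hsep y z hyz
      have key : (f a y - f a z) • (P y *ᵥ u) = 0 := by
        rw [sub_smul, sub_eq_zero, ← Matrix.smul_mulVec,
          ← mul_finsum_smul_of_orthogonal hidem horth, ← hA, ← Matrix.mulVec_mulVec, hu,
          Matrix.mulVec_smul]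
      exact (smul_eq_zero.mp key).resolve_left (sub_ne_zero.mpr ha)
    have := Fintype.ofFinite ι
    refine ⟨u, ?_⟩
    calc P z *ᵥ u = ∑ x, P x *ᵥ u :=
          (Finset.sum_eq_single z (fun y _ => hvanish y) (by simp)).symm
      _ = (∑ᶠ x, P x) *ᵥ u := by rw [finsum_eq_sum_of_fintype, Matrix.sum_mulVec]
      _ = u := by rw [hsum, Matrix.one_mulVec]

end OrthogonalIdempotents

theorem Matrix.map_eigenspace_le_of_mul_eq_smul_mul {m 𝕜 : Type*} [Fintype m] [Field 𝕜]
    {A B : Matrix m m 𝕜} {s μ : 𝕜} (h : A * B = s • (B * A)) :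
    (Module.End.eigenspace A.mulVecLin μ).map B.mulVecLin ≤
      Module.End.eigenspace A.mulVecLin (s * μ) := by
  rintro _ ⟨u, hu, rfl⟩
  rw [SetLike.mem_coe, Module.End.mem_eigenspace_iff] at hu
  rw [Module.End.mem_eigenspace_iff]
  simp only [Matrix.mulVecLin_apply] at hu ⊢
  rw [Matrix.mulVec_mulVec, h, Matrix.smul_mulVec, ← Matrix.mulVec_mulVec, hu,
    Matrix.mulVec_smul, smul_smul]

section Omega

variable (p : ℕ) [Fact p.Prime]

theorem omg_isPrimitiveRoot : IsPrimitiveRoot (omg p) p := by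
  simpa [omg] using Complex.isPrimitiveRoot_exp p (Fact.out : p.Prime).ne_zero

theorem omg_pow_eq_pow_iff {a b : ℕ} : omg p ^ a = omg p ^ b ↔ (a : ZMod p) = b := by
  rw [((omg_isPrimitiveRoot p).isOfFinOrder (Fact.out : p.Prime).ne_zero).pow_eq_pow_iff_modEq,
    ← (omg_isPrimitiveRoot p).eq_orderOf, ZMod.natCast_eq_natCast_iff]

theorem omg_pow_val_add (a b : ZMod p) :
    omg p ^ (a + b).val = omg p ^ a.val * omg p ^ b.val := by
  rw [← pow_add, omg_pow_eq_pow_iff]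
  simp

theorem omg_pow_val_injective : Function.Injective fun a : ZMod p => omg p ^ a.val := by
  intro a b h
  simpa using (omg_pow_eq_pow_iff p).mp h

end Omega

section Weyl

variable {p : ℕ} {K : Type*} [Field K] [Fintype K] [Algebra (ZMod p) K] {n : ℕ}

theorem ip_comm (x y : Fin n → K) : ip p x y = ip p y x := by
  simp only [ip, mul_comm]

theorem ip_add_left (x x' y : Fin n → K) : ip p (x + x') y = ip p x y + ip p x' y := by
  rw [ip_comm, ip_add_right, ip_comm y, ip_comm y]

theorem symp_add_right (v w w' : (Fin n → K) × (Fin n → K)) :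
    symp p v (w + w') = symp p v w + symp p v w' := by
  simp only [symp, Prod.fst_add, Prod.snd_add, ip_add_right]
  ring

theorem symp_neg_right (v w : (Fin n → K) × (Fin n → K)) : symp p v (-w) = -symp p v w := by
  simp only [symp, Prod.fst_neg, Prod.snd_neg, ip_neg_right]
  ring

variable [DecidableEq K] [Fact p.Prime]

theorem Wt_mul_Wt (a b a' b' : Fin n → K) :
    Wt p a b * Wt p a' b' = omg p ^ (ip p b a').val • Wt p (a + a') (b + b') := by
  ext j k
  simp only [mul_apply, Wt, of_apply, Matrix.smul_apply, smul_eq_mul, ite_mul, zero_mul,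
    mul_ite, mul_zero]
  rw [Finset.sum_ite_eq', if_pos (Finset.mem_univ _), add_comm a a', ← add_assoc]
  split_ifs
  · rw [ip_add_right, ip_add_left, omg_pow_val_add, omg_pow_val_add]
    ring
  · rfl

theorem Wtv_zero : Wtv p (0 : (Fin n → K) × (Fin n → K)) = 1 := by
  ext j k
  simp [Wtv, Wt, one_apply, ip]

theorem Wtv_mul_Wtv (v w : (Fin n → K) × (Fin n → K)) :
    Wtv p v * Wtv p w = omg p ^ (ip p v.2 w.1).val • Wtv p (v + w) :=
  Wt_mul_Wt _ _ _ _

theorem Wtv_mul_Wtv_neg (w : (Fin n → K) × (Fin n → K)) :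
    Wtv p w * Wtv p (-w) = omg p ^ (ip p w.2 (-w.1)).val • 1 := by
  rw [Wtv_mul_Wtv, add_neg_cancel, Wtv_zero, Prod.fst_neg]

theorem Wtv_mul_Wtv_comm (v w : (Fin n → K) × (Fin n → K)) :
    Wtv p v * Wtv p w = omg p ^ (symp p v w).val • (Wtv p w * Wtv p v) := by
  rw [Wtv_mul_Wtv, Wtv_mul_Wtv, add_comm w v, smul_smul, ← omg_pow_val_add, symp, ip_comm w.2,
    sub_add_cancel]

end Weyl

section Quotient

variable {p : ℕ} {K : Type*} [Field K] [Fintype K] [Algebra (ZMod p) K] {n : ℕ}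
  {V : Submodule K ((Fin n → K) × (Fin n → K))}

theorem symp_out_mk {v : (Fin n → K) × (Fin n → K)} (hv : v ∈ V)
    (z : (Fin n → K) × (Fin n → K)) :
    symp p v (QuotientAddGroup.mk z : _ ⧸ sympPerp p V).out = symp p v z := by
  have h := QuotientAddGroup.eq.mp (QuotientAddGroup.out_eq' (QuotientAddGroup.mk z :
    _ ⧸ sympPerp p V)) v hv
  rwa [symp_add_right, symp_neg_right, neg_add_eq_zero] at h

theorem exists_symp_out_ne {y z : _ ⧸ sympPerp p V} (h : y ≠ z) :
    ∃ v ∈ V, symp p v y.out ≠ symp p v z.out := by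
  by_contra! hall
  apply h
  rw [← QuotientAddGroup.out_eq' y, ← QuotientAddGroup.out_eq' z]
  refine QuotientAddGroup.eq.mpr fun v hv => ?_
  rw [symp_add_right, symp_neg_right, hall v hv, neg_add_cancel]

end Quotient

section JointEigenspace

variable {K : Type*} [Field K] [Fintype K] [DecidableEq K] {n : ℕ}

noncomputable def weylEigenspace (p : ℕ) [Algebra (ZMod p) K]
    (V : Submodule K ((Fin n → K) × (Fin n → K))) (c : ((Fin n → K) × (Fin n → K)) → ℂ)
    (z : (Fin n → K) × (Fin n → K)) :
    Submodule ℂ ((Fin n → K) → ℂ) :=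
  ⨅ v : V, Module.End.eigenspace (c v • Wtv p (v : (Fin n → K) × (Fin n → K))).mulVecLin
    (omg p ^ (symp p v z).val)

variable {p : ℕ} [Fact p.Prime] [Algebra (ZMod p) K]
  {V : Submodule K ((Fin n → K) × (Fin n → K))} {c : ((Fin n → K) × (Fin n → K)) → ℂ}

theorem map_Wtv_weylEigenspace_le (w z : (Fin n → K) × (Fin n → K)) :
    (weylEigenspace p V c z).map (Wtv p w).mulVecLin ≤ weylEigenspace p V c (w + z) := by
  refine le_iInf fun v => ?_
  have hcomm : (c v • Wtv p v) * Wtv p w =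
      omg p ^ (symp p v w).val • (Wtv p w * (c v • Wtv p v)) := by
    rw [smul_mul_assoc, Wtv_mul_Wtv_comm, mul_smul_comm, smul_comm]
  rw [symp_add_right, omg_pow_val_add]
  exact (Submodule.map_mono (iInf_le _ v)).trans (map_eigenspace_le_of_mul_eq_smul_mul hcomm)

theorem map_Wtv_weylEigenspace (w z : (Fin n → K) × (Fin n → K)) :
    (weylEigenspace p V c z).map (Wtv p w).mulVecLin = weylEigenspace p V c (w + z) := by
  refine le_antisymm (map_Wtv_weylEigenspace_le w z) ?_
  set E := weylEigenspace p V c (w + z)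
  set s := omg p ^ (ip p w.2 (-w.1)).val
  have hs : s ≠ 0 := pow_ne_zero _ (Complex.exp_ne_zero _)
  have hsmul : (s • 1 : Matrix (Fin n → K) (Fin n → K) ℂ).mulVecLin = s • LinearMap.id :=
    LinearMap.ext fun u => by simp
  calc E = E.map (Wtv p w * Wtv p (-w)).mulVecLin := by
        rw [Wtv_mul_Wtv_neg, hsmul, Submodule.map_smul _ _ _ hs, Submodule.map_id]
    _ = (E.map (Wtv p (-w)).mulVecLin).map (Wtv p w).mulVecLin := by
        rw [mulVecLin_mul, Submodule.map_comp]
    _ ≤ (weylEigenspace p V c z).map (Wtv p w).mulVecLin := by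
        refine Submodule.map_mono ?_
        simpa only [neg_add_cancel_left] using map_Wtv_weylEigenspace_le (-w) (w + z)

theorem range_mulVecLin_eq_weylEigenspace
    {P : ((Fin n → K) × (Fin n → K)) ⧸ sympPerp p V → Matrix (Fin n → K) (Fin n → K) ℂ}
    (hidem : ∀ x, P x * P x = P x) (horth : ∀ x y, x ≠ y → P x * P y = 0)
    (hsum : ∑ᶠ x, P x = 1)
    (hdec : ∀ v ∈ V, c v • Wtv p v = ∑ᶠ x, omg p ^ (symp p v x.out).val • P x)
    (z : (Fin n → K) × (Fin n → K)) :
    LinearMap.range (P (QuotientAddGroup.mk z)).mulVecLin = weylEigenspace p V c z := by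
  have hsep : ∀ y z : ((Fin n → K) × (Fin n → K)) ⧸ sympPerp p V, y ≠ z →
      ∃ v : V, omg p ^ (symp p v y.out).val ≠ omg p ^ (symp p v z.out).val := by
    intro y z hyz
    obtain ⟨v, hv, hne⟩ := exists_symp_out_ne hyz
    exact ⟨⟨v, hv⟩, fun h => hne (omg_pow_val_injective p h)⟩
  rw [range_mulVecLin_eq_iInf_eigenspace hidem horth hsum (fun v : V => c v • Wtv p v)
    (fun v x => omg p ^ (symp p v x.out).val) (fun v => hdec v v.2) hsep]
  exact iInf_congr fun v => by rw [symp_out_mk v.2]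

end JointEigenspace

theorem stmt_13_general (p : ℕ) [Fact p.Prime] (K : Type*) [Field K] [Fintype K] [DecidableEq K]
    [Algebra (ZMod p) K] (n : ℕ)
    (V : Submodule K ((Fin n → K) × (Fin n → K)))
    (c : ((Fin n → K) × (Fin n → K)) → ℂ)
    (P : (((Fin n → K) × (Fin n → K)) ⧸ sympPerp p V) →
      Matrix (Fin n → K) (Fin n → K) ℂ)
    (hproj : ∀ x, (P x).conjTranspose = P x ∧ P x * P x = P x)
    (horth : ∀ x y, x ≠ y → P x * P y = 0)
    (hsum : (∑ᶠ x, P x) = 1)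
    (hdec : ∀ v ∈ V, c v • Wtv p v = ∑ᶠ x, omg p ^ (symp p v x.out).val • P x) :
    ∀ w w' : (Fin n → K) × (Fin n → K),
      Submodule.map (Wtv p w).mulVecLin
          (LinearMap.range (P (QuotientAddGroup.mk w')).mulVecLin) =
        LinearMap.range (P (QuotientAddGroup.mk (w + w'))).mulVecLin := by
  intro w w'
  have hrange := range_mulVecLin_eq_weylEigenspace (fun x => (hproj x).2) horth hsum hdec
  rw [hrange, hrange, map_Wtv_weylEigenspace]

/-- Proposition 2, part 2, of the paper: with `V`, `c`, and the family
of projections `(P_{[w]})` as in Proposition 2, for all `w, w' ∈ F_q^{2n}` the image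
of the column space of `P_{[w']}` under left multiplication by `W̃(w)` equals the
column space of `P_{[w+w']}`.  The column space of a matrix `M` is
`LinearMap.range M.mulVecLin`. -/
theorem stmt_13 (p : ℕ) [Fact p.Prime] (K : Type*) [Field K] [Fintype K] [DecidableEq K]
    [Algebra (ZMod p) K] (n d : ℕ)
    (V : Submodule K ((Fin n → K) × (Fin n → K)))
    (hd : Module.finrank K V = d)
    (hV : ∀ v ∈ V, ∀ v' ∈ V, symp p v v' = 0)
    (c : ((Fin n → K) × (Fin n → K)) → ℂ) (hc0 : c 0 = 1)
    (hmul : ∀ v ∈ V, ∀ v' ∈ V,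
      (c v • Wtv p v) * (c v' • Wtv p v') = c (v + v') • Wtv p (v + v'))
    (P : (((Fin n → K) × (Fin n → K)) ⧸ sympPerp p V) →
      Matrix (Fin n → K) (Fin n → K) ℂ)
    (hproj : ∀ x, (P x).conjTranspose = P x ∧ P x * P x = P x)
    (horth : ∀ x y, x ≠ y → P x * P y = 0)
    (hsum : (∑ᶠ x, P x) = 1)
    (hdec : ∀ v ∈ V, c v • Wtv p v = ∑ᶠ x, omg p ^ (symp p v x.out).val • P x) :
    ∀ w w' : (Fin n → K) × (Fin n → K),
      Submodule.map (Wtv p w).mulVecLin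
          (LinearMap.range (P (QuotientAddGroup.mk w')).mulVecLin) =
        LinearMap.range (P (QuotientAddGroup.mk (w + w'))).mulVecLin :=
  stmt_13_general p K n V c P hproj horth hsum hdec
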